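/- arXiv:1007.2011 — 7 statements merged into one kernel-verified Lean document; each statement's English description precedes it below -/
import Mathlib

section
/- There exists a constant C > 0 such that for every m ≥ 3 and every multi-index β = (β₁, β₂, m-1-β₁-β₂) ∈ ℕ₀³, one has ∑_{s=0}^{⌊β₁/2⌋} ∑_{t=0}^{⌊β₂/2⌋} (β₁+β₂-2s-2t choose β₁-2s) · (s+t choose s) ≤ C · m · (β₁+β₂ choose β₁). -/
/-!
Group the terms by `k = s + t`. For fixed `k` the factor `b₁ + b₂ - 2s - 2t` is the constant
`b₁ + b₂ - 2k`, and since `(k choose s) ≤ (2k choose 2s)`, the terms of the group are bounded by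
distinct terms of Vandermonde's expansion of `(b₁ + b₂ choose b₁)` along `(b₁ + b₂ - 2k) + 2k`.
There are at most `b₁/2 + b₂/2 + 1 ≤ m` groups, so `C = 1` works.
-/

open Finset

namespace Nat

theorem choose_le_choose_two_mul (k s : ℕ) : k.choose s ≤ (2 * k).choose (2 * s) :=
  calc k.choose s ≤ k.choose s * k.choose s := le_mul_self _
    _ ≤ ∑ ij ∈ antidiagonal (s + s), k.choose ij.1 * k.choose ij.2 :=
        single_le_sum (f := fun ij => k.choose ij.1 * k.choose ij.2) (fun _ _ => zero_le _)
          (mem_antidiagonal.mpr (rfl : (s, s).1 + (s, s).2 = s + s))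
    _ = (2 * k).choose (2 * s) := by rw [two_mul, two_mul, add_choose_eq]

theorem sum_choose_sub_two_mul_mul_choose_le (N k b : ℕ) :
    ∑ s ∈ range (k + 1) with 2 * s ≤ b, N.choose (b - 2 * s) * k.choose s ≤
      (N + 2 * k).choose b :=
  calc ∑ s ∈ range (k + 1) with 2 * s ≤ b, N.choose (b - 2 * s) * k.choose s
      ≤ ∑ s ∈ range (k + 1) with 2 * s ≤ b, N.choose (b - 2 * s) * (2 * k).choose (2 * s) := by
        gcongr; exact choose_le_choose_two_mul k _
    _ = ∑ j ∈ {s ∈ range (k + 1) | 2 * s ≤ b}.image (2 * ·),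
          N.choose (b - j) * (2 * k).choose j :=
        by rw [sum_image fun _ _ _ _ h => by simpa using h]
    _ ≤ ∑ j ∈ range (b + 1), N.choose (b - j) * (2 * k).choose j :=
        sum_le_sum_of_subset (by intro j; simp only [mem_image, mem_filter, mem_range]; omega)
    _ = (N + 2 * k).choose b := by
        rw [add_comm N, add_choose_eq, Nat.sum_antidiagonal_eq_sum_range_succ
          (fun i j => (2 * k).choose i * N.choose j)]
        exact sum_congr rfl fun _ _ => mul_comm _ _

end Nat

theorem sum_filter_add_eq_choose_mul_choose_le (b₁ b₂ k : ℕ) :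
    ∑ p ∈ range (b₁ / 2 + 1) ×ˢ range (b₂ / 2 + 1) with p.1 + p.2 = k,
      (b₁ + b₂ - 2 * p.1 - 2 * p.2).choose (b₁ - 2 * p.1) * (p.1 + p.2).choose p.1 ≤
      (b₁ + b₂).choose b₁ := by
  set F := {p ∈ range (b₁ / 2 + 1) ×ˢ range (b₂ / 2 + 1) | p.1 + p.2 = k}
  have hF : ∀ p ∈ F, 2 * p.1 ≤ b₁ ∧ 2 * p.2 ≤ b₂ ∧ p.1 + p.2 = k := by
    intro p hp
    simp only [F, mem_filter, mem_product, mem_range] at hp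
    omega
  obtain hempty | ⟨p₀, hp₀⟩ := F.eq_empty_or_nonempty
  · simp [hempty]
  have hk : 2 * k ≤ b₁ + b₂ := by have := hF p₀ hp₀; omega
  calc ∑ p ∈ F, (b₁ + b₂ - 2 * p.1 - 2 * p.2).choose (b₁ - 2 * p.1) * (p.1 + p.2).choose p.1
      = ∑ s ∈ F.image Prod.fst, (b₁ + b₂ - 2 * k).choose (b₁ - 2 * s) * k.choose s := by
        rw [sum_image fun p hp q hq h => by have := hF p hp; have := hF q hq; ext <;> omega]
        refine sum_congr rfl fun p hp => ?_
        obtain ⟨-, -, rfl⟩ := hF p hp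
        congr 2
        omega
    _ ≤ ∑ s ∈ range (k + 1) with 2 * s ≤ b₁,
          (b₁ + b₂ - 2 * k).choose (b₁ - 2 * s) * k.choose s := by
        refine sum_le_sum_of_subset fun s hs => ?_
        obtain ⟨p, hp, rfl⟩ := mem_image.mp hs
        have := hF p hp
        simp only [mem_filter, mem_range]
        omega
    _ ≤ (b₁ + b₂ - 2 * k + 2 * k).choose b₁ := Nat.sum_choose_sub_two_mul_mul_choose_le ..
    _ = (b₁ + b₂).choose b₁ := by rw [Nat.sub_add_cancel hk]

theorem sum_range_sum_range_choose_mul_choose_le (b₁ b₂ : ℕ) :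
    ∑ s ∈ range (b₁ / 2 + 1), ∑ t ∈ range (b₂ / 2 + 1),
        (b₁ + b₂ - 2 * s - 2 * t).choose (b₁ - 2 * s) * (s + t).choose s ≤
      (b₁ / 2 + b₂ / 2 + 1) * (b₁ + b₂).choose b₁ := by
  have hmaps : ∀ p ∈ range (b₁ / 2 + 1) ×ˢ range (b₂ / 2 + 1),
      p.1 + p.2 ∈ range (b₁ / 2 + b₂ / 2 + 1) := by
    intro p hp
    simp only [mem_product, mem_range] at hp ⊢
    omega
  rw [← sum_product', ← sum_fiberwise_of_maps_to hmaps]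
  calc _ ≤ ∑ _k ∈ range (b₁ / 2 + b₂ / 2 + 1), (b₁ + b₂).choose b₁ :=
        sum_le_sum fun k _ => sum_filter_add_eq_choose_mul_choose_le b₁ b₂ k
    _ = (b₁ / 2 + b₂ / 2 + 1) * (b₁ + b₂).choose b₁ := by simp

theorem stmt4 : ∃ C : ℝ, 0 < C ∧ ∀ m β₁ β₂ : ℕ, 3 ≤ m → β₁ + β₂ + 1 ≤ m →
    (∑ s ∈ range (β₁ / 2 + 1), ∑ t ∈ range (β₂ / 2 + 1),
        ((β₁ + β₂ - 2 * s - 2 * t).choose (β₁ - 2 * s) * (s + t).choose s : ℝ)) ≤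
      C * m * ((β₁ + β₂).choose β₁ : ℝ) := by
  refine ⟨1, one_pos, fun m β₁ β₂ _ hm => ?_⟩
  have hnat := (sum_range_sum_range_choose_mul_choose_le β₁ β₂).trans
    (Nat.mul_le_mul_right ((β₁ + β₂).choose β₁) (by omega : β₁ / 2 + β₂ / 2 + 1 ≤ m))
  rw [one_mul]
  exact_mod_cast hnat
end

section
/- There exists a constant C > 0 such that for every m ≥ 3 and every multi-index β = (β₁, β₂, m-1-β₁-β₂) ∈ ℕ₀³ with β₁ ≥ 1, one has ∑_{s=0}^{⌊(β₁-1)/2⌋} ∑_{t=0}^{⌊β₂/2⌋} (β₁+β₂-2s-1-2t choose β₁-2s-1) · (s+t choose s) ≤ C · m · (β₁+β₂ choose β₁). -/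
/-! The constant `C = 1` works. Bounding `C(s+t, s) ≤ C(2k+1, 2s+1)` with `k = s + t`, the terms
with a fixed `k` become part of the Vandermonde sum `C(β₁+β₂, β₁) = ∑ⱼ C(β₁+β₂-2k-1, β₁-j) C(2k+1, j)`,
and only `⌊(β₁-1)/2⌋ + ⌊β₂/2⌋ + 1 ≤ m` values of `k` occur. -/

open Finset

namespace Nat

/-- Vandermonde's identity with the terms outside `S` dropped. -/
theorem sum_choose_sub_mul_choose_le {ι : Type*} (S : Finset ι) (f : ι → ℕ) (hf : Set.InjOn f S)
    (A B r : ℕ) (hr : ∀ i ∈ S, f i ≤ r) :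
    ∑ i ∈ S, A.choose (r - f i) * B.choose (f i) ≤ (A + B).choose r := by
  rw [← sum_image (f := fun j => A.choose (r - j) * B.choose j) hf]
  calc ∑ j ∈ S.image f, A.choose (r - j) * B.choose j
      ≤ ∑ j ∈ range (r + 1), A.choose (r - j) * B.choose j := by
        refine sum_le_sum_of_subset fun j hj => ?_
        obtain ⟨i, hi, rfl⟩ := mem_image.mp hj
        exact mem_range_succ_iff.mpr (hr i hi)
    _ = (A + B).choose r := by
        rw [add_comm A B, add_choose_eq, Finset.Nat.sum_antidiagonal_eq_sum_range_succ
          (fun i j => B.choose i * A.choose j)]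
        exact sum_congr rfl fun _ _ => mul_comm _ _

theorem choose_mul_choose_le_add_choose (a b i j : ℕ) :
    a.choose i * b.choose j ≤ (a + b).choose (i + j) := by
  simpa using sum_choose_sub_mul_choose_le {j} id (Set.injOn_id _) a b (i + j) (by simp)

theorem choose_le_two_mul_add_one_choose (k s : ℕ) :
    k.choose s ≤ (2 * k + 1).choose (2 * s + 1) := by
  rcases le_or_gt s k with hsk | hks
  · calc k.choose s ≤ k.choose s * (k + 1).choose (s + 1) :=
          Nat.le_mul_of_pos_right _ (choose_pos (by omega))
      _ ≤ (2 * k + 1).choose (2 * s + 1) := by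
          convert choose_mul_choose_le_add_choose k (k + 1) s (s + 1) using 2 <;> ring
  · simp [choose_eq_zero_of_lt hks]

end Nat

theorem sum_choose_mul_choose_le (a b : ℕ) (ha : 1 ≤ a) :
    ∑ s ∈ range ((a - 1) / 2 + 1), ∑ t ∈ range (b / 2 + 1),
        (a + b - 2 * s - 1 - 2 * t).choose (a - 2 * s - 1) * (s + t).choose s ≤
      ((a - 1) / 2 + b / 2 + 1) * (a + b).choose a := by
  set rect := range ((a - 1) / 2 + 1) ×ˢ range (b / 2 + 1)
  have maps_to : ∀ p ∈ rect, p.1 + p.2 ∈ range ((a - 1) / 2 + b / 2 + 1) := by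
    simp only [rect, mem_product, mem_range]
    omega
  rw [← sum_product', ← sum_fiberwise_of_maps_to maps_to]
  refine (sum_le_card_nsmul _ _ ((a + b).choose a) fun k hk => ?_).trans_eq (by simp)
  have hk : 2 * k + 1 ≤ a + b := by simp only [mem_range] at hk; omega
  calc ∑ p ∈ rect with p.1 + p.2 = k,
        (a + b - 2 * p.1 - 1 - 2 * p.2).choose (a - 2 * p.1 - 1) * (p.1 + p.2).choose p.1
      ≤ ∑ p ∈ rect with p.1 + p.2 = k,
        (a + b - (2 * k + 1)).choose (a - (2 * p.1 + 1)) * (2 * k + 1).choose (2 * p.1 + 1) := by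
        refine sum_le_sum fun p hp => ?_
        obtain ⟨hp, rfl⟩ := mem_filter.mp hp
        rw [show a + b - 2 * p.1 - 1 - 2 * p.2 = a + b - (2 * (p.1 + p.2) + 1) by omega,
          show a - 2 * p.1 - 1 = a - (2 * p.1 + 1) by omega]
        exact Nat.mul_le_mul_left _ (Nat.choose_le_two_mul_add_one_choose _ _)
    _ ≤ (a + b - (2 * k + 1) + (2 * k + 1)).choose a := by
        refine Nat.sum_choose_sub_mul_choose_le _ _ ?_ _ _ _ ?_
        · intro p hp q hq hpq
          simp only [coe_filter, Set.mem_ofPred_eq] at hp hq hpq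
          ext <;> omega
        · intro p hp
          simp only [rect, mem_filter, mem_product, mem_range] at hp
          omega
    _ = (a + b).choose a := by rw [Nat.sub_add_cancel hk]

theorem stmt5 : ∃ C : ℝ, 0 < C ∧ ∀ m β₁ β₂ : ℕ, 3 ≤ m → 1 ≤ β₁ → β₁ + β₂ + 1 ≤ m →
    (∑ s ∈ range ((β₁ - 1) / 2 + 1), ∑ t ∈ range (β₂ / 2 + 1),
        ((β₁ + β₂ - 2 * s - 1 - 2 * t).choose (β₁ - 2 * s - 1) * (s + t).choose s : ℝ)) ≤
      C * m * ((β₁ + β₂).choose β₁ : ℝ) := by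
  refine ⟨1, one_pos, fun m β₁ β₂ _ hβ₁ hm => ?_⟩
  have hcount : (β₁ - 1) / 2 + β₂ / 2 + 1 ≤ m := by omega
  rw [one_mul]
  exact_mod_cast (sum_choose_mul_choose_le β₁ β₂ hβ₁).trans (Nat.mul_le_mul_right _ hcount)
end

section
/- There exists a constant C > 0 such that for all natural numbers β₁, β₂, the double sum of reciprocal binomial coefficients satisfies ∑_{s=0}^{⌊β₁/2⌋} ∑_{t=0}^{⌊β₂/2⌋} (s+t choose s)⁻¹ ≤ C · (β₁+β₂+1). -/
open Finset

lemma pow2_le_choose : ∀ (k n : ℕ), 2 * k ≤ n → 2 ^ k ≤ n.choose k := by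
  intro k
  induction k with
  | zero => simp
  | succ k ih =>
    intro n hn
    obtain ⟨m, rfl⟩ : ∃ m, n = m + 1 := ⟨n - 1, by omega⟩
    have h2 := ih m (by omega)
    have key : (m + 1).choose (k + 1) * (k + 1) = (m + 1) * m.choose k := by
      simpa [Nat.succ_eq_add_one, mul_comm] using (Nat.add_one_mul_choose_eq m k).symm
    have hmain : 2 ^ (k + 1) * (k + 1) ≤ (m + 1) * m.choose k := by
      calc 2 ^ (k + 1) * (k + 1) = 2 * (k + 1) * 2 ^ k := by ring
        _ ≤ (m + 1) * m.choose k := Nat.mul_le_mul (by omega) h2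
    have : 2 ^ (k + 1) * (k + 1) ≤ (m + 1).choose (k + 1) * (k + 1) := by
      rw [key]; exact hmain
    exact Nat.le_of_mul_le_mul_right this (by omega)

lemma term_le (s t : ℕ) : ((s + t).choose s : ℝ)⁻¹ ≤ (1/2 : ℝ) ^ s + (1/2 : ℝ) ^ t := by
  have hmin : 2 ^ (min s t) ≤ (s + t).choose s := by
    rcases le_total s t with h | h
    · rw [min_eq_left h]
      exact pow2_le_choose s (s + t) (by omega)
    · rw [min_eq_right h]
      have := pow2_le_choose t (s + t) (by omega)
      rwa [← Nat.choose_symm (by omega : t ≤ s + t),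
        (by omega : s + t - t = s)] at this
  have hpos : (0:ℝ) < ((s + t).choose s : ℝ) := by
    exact_mod_cast Nat.choose_pos (by omega : s ≤ s + t)
  have h1 : ((s + t).choose s : ℝ)⁻¹ ≤ ((2:ℝ) ^ (min s t))⁻¹ := by
    apply inv_anti₀ (by positivity)
    exact_mod_cast hmin
  have h2 : ((2:ℝ) ^ (min s t))⁻¹ = (1/2 : ℝ) ^ (min s t) := by
    rw [one_div, inv_pow]
  have h3 : (1/2 : ℝ) ^ (min s t) ≤ (1/2 : ℝ) ^ s + (1/2 : ℝ) ^ t := by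
    rcases le_total s t with h | h
    · rw [min_eq_left h]; nlinarith [pow_pos (by norm_num : (0:ℝ) < 1/2) t]
    · rw [min_eq_right h]; nlinarith [pow_pos (by norm_num : (0:ℝ) < 1/2) s]
  linarith [h1, h2 ▸ h1]

theorem stmt6 : ∃ C : ℝ, 0 < C ∧ ∀ β₁ β₂ : ℕ,
    (∑ s ∈ range (β₁ / 2 + 1), ∑ t ∈ range (β₂ / 2 + 1),
        ((s + t).choose s : ℝ)⁻¹) ≤ C * (β₁ + β₂ + 1) := by
  refine ⟨8, by norm_num, fun β₁ β₂ => ?_⟩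
  set A := β₁ / 2 + 1
  set B := β₂ / 2 + 1
  have hsum : (∑ s ∈ range A, ∑ t ∈ range B, ((s + t).choose s : ℝ)⁻¹)
      ≤ ∑ s ∈ range A, ∑ t ∈ range B, ((1/2:ℝ)^s + (1/2:ℝ)^t) := by
    apply Finset.sum_le_sum; intro s _
    apply Finset.sum_le_sum; intro t _
    exact term_le s t
  have hgeomA : ∑ s ∈ range A, (1/2:ℝ)^s ≤ 2 := sum_geometric_two_le A
  have hgeomB : ∑ t ∈ range B, (1/2:ℝ)^t ≤ 2 := sum_geometric_two_le B
  have hsplit : (∑ s ∈ range A, ∑ t ∈ range B, ((1/2:ℝ)^s + (1/2:ℝ)^t))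
      = (B : ℝ) * ∑ s ∈ range A, (1/2:ℝ)^s + (A : ℝ) * ∑ t ∈ range B, (1/2:ℝ)^t := by
    simp [Finset.sum_add_distrib, Finset.mul_sum, Finset.sum_comm, mul_comm]
  have hA : (A : ℝ) ≤ β₁ + 1 := by
    have : A ≤ β₁ + 1 := by omega
    exact_mod_cast this
  have hB : (B : ℝ) ≤ β₂ + 1 := by
    have : B ≤ β₂ + 1 := by omega
    exact_mod_cast this
  have hApos : (0:ℝ) ≤ (A:ℝ) := by positivity
  have hBpos : (0:ℝ) ≤ (B:ℝ) := by positivity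
  calc (∑ s ∈ range A, ∑ t ∈ range B, ((s + t).choose s : ℝ)⁻¹)
      ≤ (B : ℝ) * ∑ s ∈ range A, (1/2:ℝ)^s + (A : ℝ) * ∑ t ∈ range B, (1/2:ℝ)^t := by
        rw [← hsplit]; exact hsum
    _ ≤ (B : ℝ) * 2 + (A : ℝ) * 2 := by
        have h1 : ∑ s ∈ range A, (1/2:ℝ)^s ≥ 0 := by positivity
        have h2 : ∑ t ∈ range B, (1/2:ℝ)^t ≥ 0 := by positivity
        nlinarith
    _ ≤ 8 * (β₁ + β₂ + 1) := by nlinarith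
end

section
/- For all natural numbers s, t with s ≥ 1 and t ≥ 1, one has s!·t!/(s+t)! ≤ e^{9/8} · √(s·t/(s+t)) · (1+s/t)^{-t} · (1+t/s)^{-s}. -/
/-!
Write `n! = σₙ · √(2n) · (n/e)ⁿ` with `σₙ = Stirling.stirlingSeq n`. The sequence `σₙ` decreases
from `σ₁ = e/√2` to its limit `√π`, so for `n ≥ 1`
`e^{7/8} √n (n/e)ⁿ ≤ √(2π) √n (n/e)ⁿ ≤ n! ≤ e √n (n/e)ⁿ`.
Bounding `s!` and `t!` from above and `(s+t)!` from below, the powers of `e` cancel up to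
`e² / e^{7/8} = e^{9/8}`, and `sˢ tᵗ / (s+t)^{s+t} = (1 + s/t)^{-t} (1 + t/s)^{-s}`.
-/

open Real
open scoped Nat

namespace Stirling

theorem stirlingSeq_le_stirlingSeq_one {n : ℕ} (hn : n ≠ 0) : stirlingSeq n ≤ exp 1 / √2 := by
  obtain ⟨m, rfl⟩ := Nat.exists_eq_succ_of_ne_zero hn
  simpa using stirlingSeq'_antitone (Nat.zero_le m)

theorem factorial_le_exp_one_mul_sqrt_mul {n : ℕ} (hn : n ≠ 0) :
    (n ! : ℝ) ≤ exp 1 * √n * (n / exp 1) ^ n := by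
  have hpos : 0 < √(2 * n : ℝ) * (n / exp 1) ^ n := by positivity
  have hsqrt : exp 1 / √2 * √(2 * n : ℝ) = exp 1 * √n := by
    rw [sqrt_mul zero_le_two]; field_simp
  calc (n ! : ℝ) = stirlingSeq n * (√(2 * n : ℝ) * (n / exp 1) ^ n) :=
        (div_mul_cancel₀ _ hpos.ne').symm
    _ ≤ exp 1 / √2 * (√(2 * n : ℝ) * (n / exp 1) ^ n) :=
        mul_le_mul_of_nonneg_right (stirlingSeq_le_stirlingSeq_one hn) hpos.le
    _ = exp 1 * √n * (n / exp 1) ^ n := by rw [← mul_assoc, hsqrt]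

theorem exp_seven_eighths_le_sqrt_two_pi : exp (7 / 8) ≤ √(2 * π) := by
  rw [le_sqrt (exp_pos _).le (by positivity), ← exp_nat_mul]
  refine (pow_le_pow_iff_left₀ (exp_pos _).le (by positivity) (by norm_num : (4 : ℕ) ≠ 0)).mp ?_
  calc exp ((2 : ℕ) * (7 / 8)) ^ 4 = exp 1 ^ 7 := by rw [← exp_nat_mul, ← exp_nat_mul]; norm_num
    _ ≤ 2.7182818286 ^ 7 := by gcongr; exact exp_one_lt_d9.le
    _ ≤ (2 * 3.14) ^ 4 := by norm_num
    _ ≤ (2 * π) ^ 4 := by gcongr; exact pi_gt_d2.le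

theorem exp_seven_eighths_mul_sqrt_mul_le_factorial (n : ℕ) :
    exp (7 / 8) * √n * (n / exp 1) ^ n ≤ n ! := by
  refine le_trans ?_ (le_factorial_stirling n)
  rw [sqrt_mul (by positivity)]
  gcongr
  exact exp_seven_eighths_le_sqrt_two_pi

end Stirling

theorem div_pow_mul_div_pow_div_add_div_pow {a b c : ℝ} (ha : 0 < a) (hb : 0 < b) (hc : c ≠ 0)
    (m n : ℕ) :
    (a / c) ^ m * (b / c) ^ n / ((a + b) / c) ^ (m + n) =
      ((1 + a / b) ^ n)⁻¹ * ((1 + b / a) ^ m)⁻¹ := by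
  have hab : a + b ≠ 0 := by positivity
  rw [one_add_div hb.ne', one_add_div ha.ne', add_comm b a]
  simp only [div_pow, inv_div, pow_add]
  field_simp

open Stirling in
theorem stmt7 (s t : ℕ) (hs : 1 ≤ s) (ht : 1 ≤ t) :
    ((s.factorial : ℝ) * t.factorial) / (s + t).factorial ≤
      Real.exp (9 / 8) * Real.sqrt ((s * t : ℝ) / (s + t)) *
        ((1 + (s : ℝ) / t) ^ t)⁻¹ * ((1 + (t : ℝ) / s) ^ s)⁻¹ := by
  have hs0 : (0 : ℝ) < s := by exact_mod_cast hs
  have ht0 : (0 : ℝ) < t := by exact_mod_cast ht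
  have hexp : exp 1 * exp 1 / exp (7 / 8) = exp (9 / 8) := by
    rw [← exp_add, ← exp_sub]; norm_num
  have hsqrt : √s * √t / √(s + t) = √((s * t : ℝ) / (s + t)) := by
    rw [sqrt_div' _ (by positivity), sqrt_mul hs0.le]
  have hlower := exp_seven_eighths_mul_sqrt_mul_le_factorial (s + t)
  push_cast at hlower
  calc (s ! : ℝ) * t ! / (s + t)!
      ≤ (exp 1 * √s * (s / exp 1) ^ s) * (exp 1 * √t * (t / exp 1) ^ t) /
          (exp (7 / 8) * √(s + t : ℝ) * ((s + t : ℝ) / exp 1) ^ (s + t)) := by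
        gcongr
        exacts [factorial_le_exp_one_mul_sqrt_mul (by omega),
          factorial_le_exp_one_mul_sqrt_mul (by omega)]
    _ = exp 1 * exp 1 / exp (7 / 8) * (√s * √t / √(s + t)) *
          ((s / exp 1) ^ s * (t / exp 1) ^ t / ((s + t : ℝ) / exp 1) ^ (s + t)) := by
        field_simp
    _ = _ := by
        rw [hexp, hsqrt, div_pow_mul_div_pow_div_add_div_pow hs0 ht0 (exp_pos 1).ne']
        ring
end

section
/- There exists a constant C > 0 such that for all natural numbers β₁ ≥ 4, β₂ ≥ 4, one has ∑_{s=2}^{⌊β₁/2⌋} ∑_{t=2}^{⌊β₂/2⌋} (s+t choose s)⁻¹ ≤ C · β₁. -/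
open Finset

lemma term_bound (s t : ℕ) (hs : 2 ≤ s) :
    ((s + t).choose s : ℝ)⁻¹ ≤ 2 / ((t : ℝ) + 1) - 2 / ((t : ℝ) + 2) := by
  have h1 : (t + 2).choose 2 ≤ (s + t).choose s := by
    have e1 : (s + t).choose s = (t + s).choose t := by
      rw [Nat.choose_symm_add, Nat.add_comm]
    have e2 : (t + 2).choose 2 = (t + 2).choose t := by
      rw [Nat.add_comm t 2]; exact Nat.choose_symm_add
    rw [e1, e2]
    exact Nat.choose_le_choose t (by omega)
  have h2 : ((t : ℝ) + 1) * ((t : ℝ) + 2) / 2 ≤ ((s + t).choose s : ℝ) := by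
    have hc : (((t + 2).choose 2 : ℕ) : ℝ) = ((t : ℝ) + 2) * ((t : ℝ) + 1) / 2 := by
      rw [Nat.cast_choose_two]; push_cast; ring
    have := Nat.cast_le (α := ℝ).2 h1
    rw [hc] at this
    linarith
  have hpos : (0 : ℝ) < ((t : ℝ) + 1) * ((t : ℝ) + 2) / 2 := by positivity
  have hinv : ((s + t).choose s : ℝ)⁻¹ ≤ (((t : ℝ) + 1) * ((t : ℝ) + 2) / 2)⁻¹ :=
    inv_anti₀ hpos h2
  refine hinv.trans ?_
  have hp1 : (0 : ℝ) < (t : ℝ) + 1 := by positivity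
  have hp2 : (0 : ℝ) < (t : ℝ) + 2 := by positivity
  rw [div_sub_div _ _ (ne_of_gt hp1) (ne_of_gt hp2), inv_div,
    div_le_div_iff₀ (by positivity) (by positivity)]
  ring_nf
  nlinarith

lemma inner_bound (s N : ℕ) (hs : 2 ≤ s) :
    ∑ t ∈ Icc 2 N, ((s + t).choose s : ℝ)⁻¹ ≤ 2 := by
  calc ∑ t ∈ Icc 2 N, ((s + t).choose s : ℝ)⁻¹
      ≤ ∑ t ∈ Icc 2 N, (2 / ((t : ℝ) + 1) - 2 / ((t : ℝ) + 2)) :=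
        Finset.sum_le_sum fun t _ => term_bound s t hs
    _ ≤ ∑ t ∈ Finset.range (N + 1), (2 / ((t : ℝ) + 1) - 2 / ((t : ℝ) + 2)) := by
        apply Finset.sum_le_sum_of_subset_of_nonneg
        · intro t ht
          simp only [Finset.mem_Icc] at ht
          simp only [Finset.mem_range]; omega
        · intro t _ _
          have h1 : (0 : ℝ) < (t : ℝ) + 1 := by positivity
          rw [sub_nonneg]
          apply div_le_div_of_nonneg_left (by norm_num) h1 (by linarith)
    _ = 2 / ((0 : ℕ) + 1 : ℝ) - 2 / (((N + 1 : ℕ) : ℝ) + 1) := by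
        rw [← Finset.sum_range_sub' (fun t : ℕ => 2 / ((t : ℝ) + 1)) (N + 1)]
        refine Finset.sum_congr rfl fun t _ => ?_
        push_cast; ring
    _ ≤ 2 := by
        have h : (0 : ℝ) ≤ 2 / (((N + 1 : ℕ) : ℝ) + 1) := by positivity
        push_cast at h ⊢
        linarith

theorem stmt10 : ∃ C : ℝ, 0 < C ∧ ∀ β₁ β₂ : ℕ, 4 ≤ β₁ → 4 ≤ β₂ →
    (∑ s ∈ Icc 2 (β₁ / 2), ∑ t ∈ Icc 2 (β₂ / 2),
        ((s + t).choose s : ℝ)⁻¹) ≤ C * β₁ := by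
  refine ⟨2, by norm_num, fun β₁ β₂ h₁ h₂ => ?_⟩
  calc ∑ s ∈ Icc 2 (β₁ / 2), ∑ t ∈ Icc 2 (β₂ / 2), ((s + t).choose s : ℝ)⁻¹
      ≤ ∑ s ∈ Icc 2 (β₁ / 2), (2 : ℝ) :=
        Finset.sum_le_sum fun s hs => inner_bound s (β₂ / 2) (Finset.mem_Icc.1 hs).1
    _ = ((Icc 2 (β₁ / 2)).card : ℝ) * 2 := by rw [Finset.sum_const]; ring
    _ ≤ (β₁ : ℝ) * 2 := by
        have h : (Icc 2 (β₁ / 2)).card ≤ β₁ := by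
          rw [Nat.card_Icc]; omega
        have := Nat.cast_le (α := ℝ).2 h
        linarith
    _ = 2 * β₁ := by ring
end

section
/- For all natural numbers s ≥ 2 and t ≥ 2, one has (s+t choose s)⁻¹ ≤ e^{9/8} · √t · (1 + (s choose 2)·(t/s)²)⁻¹. -/
/-!
Stirling's bound is far stronger than needed here: `(s choose 2) (t/s)² ≤ t²/2`, while for `s ≥ 2`
the binomial coefficient is at least `(t+2 choose 2) = (t+2)(t+1)/2` and `e^{9/8} √t ≥ 2`, so
`(1 + t²/2) ≤ 2 · (t+2 choose 2) ≤ e^{9/8} √t · (s+t choose s)`.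
-/

open Real

lemma choose_two_mul_div_sq_le (s : ℕ) (x : ℝ) :
    (s.choose 2 : ℝ) * (x / s) ^ 2 ≤ x ^ 2 / 2 := by
  rcases Nat.eq_zero_or_pos s with rfl | hs
  · simp [sq_nonneg, div_nonneg]
  have hs' : (0 : ℝ) < s := by exact_mod_cast hs
  rw [Nat.cast_choose_two, div_pow, div_mul_div_comm, div_le_div_iff₀ (by positivity) two_pos]
  nlinarith [sq_nonneg x, mul_nonneg (sq_nonneg x) hs'.le]

lemma choose_add_le_choose_add_of_le {k s : ℕ} (t : ℕ) (hks : k ≤ s) :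
    (t + k).choose k ≤ (s + t).choose s := by
  rw [Nat.choose_symm_add, Nat.add_comm t k, Nat.choose_symm_add]
  exact Nat.choose_le_choose t (by omega)

lemma two_le_exp_mul_sqrt {x : ℝ} (hx : 1 ≤ x) : 2 ≤ exp (9 / 8) * √x := by
  have hexp : 2 ≤ exp (9 / 8) := by linarith [add_one_le_exp (9 / 8 : ℝ)]
  have hsqrt : 1 ≤ √x := one_le_sqrt.mpr hx
  nlinarith

theorem stmt11 (s t : ℕ) (hs : 2 ≤ s) (ht : 2 ≤ t) :
    (((s + t).choose s : ℝ))⁻¹ ≤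
      Real.exp (9 / 8) * Real.sqrt t * (1 + (s.choose 2 : ℝ) * ((t : ℝ) / s) ^ 2)⁻¹ := by
  have hC := choose_two_mul_div_sq_le s (t : ℝ)
  have hK := two_le_exp_mul_sqrt (x := t) (by exact_mod_cast (by omega : 1 ≤ t))
  have hchoose : ((t + 2).choose 2 : ℝ) ≤ (s + t).choose s := by
    exact_mod_cast choose_add_le_choose_add_of_le t hs
  have hchoose_two : ((t + 2).choose 2 : ℝ) = (t + 2) * (t + 1) / 2 := by
    rw [Nat.cast_choose_two]; push_cast; ring
  have hpos : (0 : ℝ) < (s + t).choose s := by exact_mod_cast Nat.choose_pos (by omega)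
  have key : 1 + (s.choose 2 : ℝ) * ((t : ℝ) / s) ^ 2 ≤ exp (9 / 8) * √t * (s + t).choose s :=
    calc 1 + (s.choose 2 : ℝ) * ((t : ℝ) / s) ^ 2
        ≤ 2 * ((t + 2).choose 2 : ℝ) := by rw [hchoose_two]; nlinarith [t.cast_nonneg (α := ℝ)]
      _ ≤ exp (9 / 8) * √t * (s + t).choose s := by gcongr
  rw [← div_eq_mul_inv, le_div_iff₀ (by positivity), inv_mul_le_iff₀ hpos]
  linarith
end

section
/- For all natural numbers m ≥ 6 and j with 3 ≤ j ≤ ⌊m/2⌋, and real s ≥ 1, the quantity A = (m choose j) · ((m-3) choose (j-1))^{-s} · ((m-j-2)·(j-1)^{s/4}·(j-2)^{s/4})⁻¹ is bounded above by a universal constant C independent of m, j, and s. -/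
theorem stmt14 : ∃ C : ℝ, 0 < C ∧ ∀ (m j : ℕ) (s : ℝ), 6 ≤ m → 3 ≤ j → j ≤ m / 2 → 1 ≤ s →
    (m.choose j : ℝ) * ((m - 3).choose (j - 1) : ℝ) ^ (-s) *
      (((m - j - 2 : ℕ) : ℝ) * ((j - 1 : ℕ) : ℝ) ^ (s / 4) * ((j - 2 : ℕ) : ℝ) ^ (s / 4))⁻¹
      ≤ C := by
  refine ⟨72, by norm_num, fun m j s hm hj hjm hs => ?_⟩
  obtain ⟨b, rfl⟩ : ∃ b, j = b + 3 := ⟨j - 3, by omega⟩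
  obtain ⟨d, rfl⟩ : ∃ d, m = 2 * b + 6 + d := ⟨m - (2 * b + 6), by omega⟩
  rw [show 2 * b + 6 + d - 3 = 2 * b + 3 + d by omega,
    show b + 3 - 1 = b + 2 by omega,
    show 2 * b + 6 + d - (b + 3) - 2 = b + 1 + d by omega,
    show b + 3 - 2 = b + 1 by omega]
  set C1 : ℕ := (2 * b + 6 + d).choose (b + 3) with hC1
  set C2 : ℕ := (2 * b + 3 + d).choose (b + 2) with hC2
  -- key combinatorial identity
  have hfac := Nat.choose_mul_factorial_mul_factorial (show b + 3 ≤ 2 * b + 6 + d by omega)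
  rw [show 2 * b + 6 + d - (b + 3) = b + 3 + d by omega] at hfac
  have hfac2 := Nat.choose_mul_factorial_mul_factorial (show b + 2 ≤ 2 * b + 3 + d by omega)
  rw [show 2 * b + 3 + d - (b + 2) = b + 1 + d by omega] at hfac2
  have e1 : (b + 3).factorial = (b + 3) * (b + 2).factorial := by
    rw [show b + 3 = (b + 2) + 1 by omega, Nat.factorial_succ]
  have e2 : (b + 3 + d).factorial = (b + 3 + d) * ((b + 2 + d) * (b + 1 + d).factorial) := by
    rw [show b + 3 + d = (b + 2 + d) + 1 by omega, Nat.factorial_succ,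
      show b + 2 + d = (b + 1 + d) + 1 by omega, Nat.factorial_succ]
  have e3 : (2 * b + 6 + d).factorial
      = (2 * b + 6 + d) * ((2 * b + 5 + d) * ((2 * b + 4 + d) * (2 * b + 3 + d).factorial)) := by
    rw [show 2 * b + 6 + d = (2 * b + 5 + d) + 1 by omega, Nat.factorial_succ,
      show 2 * b + 5 + d = (2 * b + 4 + d) + 1 by omega, Nat.factorial_succ,
      show 2 * b + 4 + d = (2 * b + 3 + d) + 1 by omega, Nat.factorial_succ]
  have hid : C1 * ((b + 3) * ((b + 3 + d) * (b + 2 + d)))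
      = (2 * b + 6 + d) * ((2 * b + 5 + d) * (2 * b + 4 + d)) * C2 := by
    apply Nat.eq_of_mul_eq_mul_right
      (Nat.mul_pos (Nat.factorial_pos (b + 2)) (Nat.factorial_pos (b + 1 + d)))
    calc C1 * ((b + 3) * ((b + 3 + d) * (b + 2 + d)))
          * ((b + 2).factorial * (b + 1 + d).factorial)
        = C1 * (b + 3).factorial * (b + 3 + d).factorial := by rw [e1, e2]; ring
      _ = (2 * b + 6 + d).factorial := hfac
      _ = (2 * b + 6 + d) * ((2 * b + 5 + d) * ((2 * b + 4 + d)
            * (C2 * (b + 2).factorial * (b + 1 + d).factorial))) := by rw [e3, hfac2]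
      _ = (2 * b + 6 + d) * ((2 * b + 5 + d) * (2 * b + 4 + d)) * C2
          * ((b + 2).factorial * (b + 1 + d).factorial) := by ring
  have hC2pos : 0 < C2 := Nat.choose_pos (by omega)
  have hpoly : (2 * b + 6 + d) * ((2 * b + 5 + d) * (2 * b + 4 + d))
      ≤ 72 * ((b + 1 + d) * ((b + 3) * ((b + 3 + d) * (b + 2 + d)))) := by
    calc (2 * b + 6 + d) * ((2 * b + 5 + d) * (2 * b + 4 + d))
        ≤ (2 * (b + 3 + d)) * ((3 * (b + 2 + d)) * (4 * (b + 1 + d))) :=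
          Nat.mul_le_mul (by omega) (Nat.mul_le_mul (by omega) (by omega))
      _ = 24 * ((b + 3 + d) * ((b + 2 + d) * (b + 1 + d))) := by ring
      _ ≤ 24 * ((b + 3) * ((b + 3 + d) * ((b + 2 + d) * (b + 1 + d)))) :=
          Nat.mul_le_mul_left _ (Nat.le_mul_of_pos_left _ (by omega))
      _ = 24 * ((b + 1 + d) * ((b + 3) * ((b + 3 + d) * (b + 2 + d)))) := by ring
      _ ≤ 72 * ((b + 1 + d) * ((b + 3) * ((b + 3 + d) * (b + 2 + d)))) :=
          Nat.mul_le_mul_right _ (by omega)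
  have hnat : C1 ≤ 72 * (C2 * (b + 1 + d)) := by
    have hFpos : 0 < (b + 3) * ((b + 3 + d) * (b + 2 + d)) := by positivity
    apply Nat.le_of_mul_le_mul_right _ hFpos
    rw [hid]
    calc (2 * b + 6 + d) * ((2 * b + 5 + d) * (2 * b + 4 + d)) * C2
        ≤ 72 * ((b + 1 + d) * ((b + 3) * ((b + 3 + d) * (b + 2 + d)))) * C2 :=
          Nat.mul_le_mul_right _ hpoly
      _ = 72 * (C2 * (b + 1 + d)) * ((b + 3) * ((b + 3 + d) * (b + 2 + d))) := by ring
  -- real estimates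
  have hY1 : (1 : ℝ) ≤ (C2 : ℝ) := by exact_mod_cast hC2pos
  have hYpos : (0 : ℝ) < (C2 : ℝ) := by linarith
  have hDpos : (0 : ℝ) < ((b + 1 + d : ℕ) : ℝ) := by positivity
  have hp1 : (1 : ℝ) ≤ ((b + 2 : ℕ) : ℝ) ^ (s / 4) :=
    Real.one_le_rpow (by exact_mod_cast Nat.le_add_left 1 (b + 1)) (by linarith)
  have hp2 : (1 : ℝ) ≤ ((b + 1 : ℕ) : ℝ) ^ (s / 4) :=
    Real.one_le_rpow (by exact_mod_cast Nat.le_add_left 1 b) (by linarith)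
  have hYs : (C2 : ℝ) ^ (-s) ≤ (C2 : ℝ)⁻¹ := by
    have := Real.rpow_le_rpow_of_exponent_le hY1 (show -s ≤ -1 by linarith)
    rwa [Real.rpow_neg_one] at this
  have hDle : ((b + 1 + d : ℕ) : ℝ)
      ≤ ((b + 1 + d : ℕ) : ℝ) * ((b + 2 : ℕ) : ℝ) ^ (s / 4) * ((b + 1 : ℕ) : ℝ) ^ (s / 4) := by
    calc ((b + 1 + d : ℕ) : ℝ) = ((b + 1 + d : ℕ) : ℝ) * 1 * 1 := by ring
      _ ≤ ((b + 1 + d : ℕ) : ℝ) * ((b + 2 : ℕ) : ℝ) ^ (s / 4) * ((b + 1 : ℕ) : ℝ) ^ (s / 4) :=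
          mul_le_mul (mul_le_mul_of_nonneg_left hp1 hDpos.le) hp2 (by norm_num) (by positivity)
  have hinv : (((b + 1 + d : ℕ) : ℝ) * ((b + 2 : ℕ) : ℝ) ^ (s / 4)
      * ((b + 1 : ℕ) : ℝ) ^ (s / 4))⁻¹ ≤ (((b + 1 + d : ℕ) : ℝ))⁻¹ :=
    inv_anti₀ hDpos hDle
  have hXnn : (0 : ℝ) ≤ (C1 : ℝ) := Nat.cast_nonneg _
  calc (C1 : ℝ) * (C2 : ℝ) ^ (-s)
        * (((b + 1 + d : ℕ) : ℝ) * ((b + 2 : ℕ) : ℝ) ^ (s / 4)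
          * ((b + 1 : ℕ) : ℝ) ^ (s / 4))⁻¹
      ≤ (C1 : ℝ) * (C2 : ℝ)⁻¹ * (((b + 1 + d : ℕ) : ℝ))⁻¹ := by
        apply mul_le_mul _ hinv (by positivity) (by positivity)
        exact mul_le_mul_of_nonneg_left hYs hXnn
    _ = (C1 : ℝ) / ((C2 : ℝ) * ((b + 1 + d : ℕ) : ℝ)) := by
        rw [mul_assoc, ← mul_inv, div_eq_mul_inv]
    _ ≤ 72 := by
        rw [div_le_iff₀ (by positivity)]
        calc (C1 : ℝ) ≤ ((72 * (C2 * (b + 1 + d)) : ℕ) : ℝ) := by exact_mod_cast hnat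
          _ = 72 * ((C2 : ℝ) * ((b + 1 + d : ℕ) : ℝ)) := by push_cast; ring
end
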